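/- arXiv:1604.00622 — 2 statements merged into one kernel-verified Lean document; each statement's English description precedes it below -/
import Mathlib

section
/- For every nonnegative integer n, \sum_{l,m\ge 0} \mathscr{B}_m^{(-l)}(n) x^l y^m = \sum_{j\ge 0} j! (j+n)! Q_j(x) Q_j(y) as formal power series, where Q_j(X) = X^j / ((1-X)(1-2X)\cdots(1-(j+1)X)) and \mathscr{B}_m^{(-l)}(n) = \sum_{j=0}^{n} [n choose_1 j] B_m^{(-l-j)}(n). -/
open PowerSeries Finset

/-- Unsigned Stirling numbers of the first kind. -/
def stirling1 : ℕ → ℕ → ℕ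
  | 0, 0 => 1
  | 0, _ + 1 => 0
  | _ + 1, 0 => 0
  | n + 1, m + 1 => stirling1 n m + n * stirling1 n (m + 1)

/-- Stirling numbers of the second kind. -/
def stirling2 : ℕ → ℕ → ℕ
  | 0, 0 => 1
  | 0, _ + 1 => 0
  | _ + 1, 0 => 0
  | n + 1, m + 1 => stirling2 n m + (m + 1) * stirling2 n (m + 1)

/-- e^t as a formal power series over ℚ. -/
noncomputable def expQ : PowerSeries ℚ := PowerSeries.exp ℚ

/-- e^{-t} as a formal power series over ℚ. -/
noncomputable def expNegQ : PowerSeries ℚ := rescale (-1) expQ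

/-- The formal power series Li_k(1-e^{-t})/(1-e^{-t}) = ∑_{m≥0} (m+1)^{-k} (1-e^{-t})^m,
  defined coefficientwise (the tail vanishes since (1-e^{-t})^m has order m). -/
noncomputable def liEGF (k : ℤ) : PowerSeries ℚ :=
  PowerSeries.mk fun j =>
    ∑ m ∈ range (j + 1), ((m : ℚ) + 1) ^ (-k) * coeff j ((1 - expNegQ) ^ m)

/-- EGF of the poly-Bernoulli polynomials: e^{-xt} Li_k(1-e^{-t})/(1-e^{-t}). -/
noncomputable def pbEGF (k : ℤ) (x : ℚ) : PowerSeries ℚ := rescale (-x) expQ * liEGF k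

/-- Poly-Bernoulli polynomial value B_m^{(k)}(x). -/
noncomputable def pbPoly (k : ℤ) (x : ℚ) (m : ℕ) : ℚ := m.factorial * coeff m (pbEGF k x)

/-- Poly-Bernoulli number B_m^{(k)}. -/
noncomputable def pbB (k : ℤ) (m : ℕ) : ℚ := pbPoly k 0 m

/-- Poly-Bernoulli number C_m^{(k)}. -/
noncomputable def pbC (k : ℤ) (m : ℕ) : ℚ := pbPoly k 1 m

/-- 𝓑_m^{(-l)}(n) = ∑_{j=0}^n [n j] B_m^{(-l-j)}(n). -/
noncomputable def scrB (l m n : ℕ) : ℚ :=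
  ∑ j ∈ range (n + 1), (stirling1 n j : ℚ) * pbPoly (-(l : ℤ) - j) n m

/-- Q_j(X) = X^j/((1-X)(1-2X)⋯(1-(j+1)X)) as a formal power series. -/
noncomputable def Qser (j : ℕ) : PowerSeries ℚ :=
  X ^ j * ∏ ν ∈ range (j + 1), Ring.inverse (1 - (((ν : ℚ) + 1)) • X)

/-!
Summing against `[n j]` turns `∑_j [n j] (p+1)^(l+j)` into `(p+1)^l (p+n)!/p!`, so
`𝓑_m^{(-l)}(n)` is `m!` times the `t^m` coefficient of `e^{-nt} f(1 - e^{-t})`, where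
`f(u) = ∑_p (p+1)^l (p+n)!/p! u^p`. Writing `(p+1)^l = ∑_q S(l+1,q+1) p(p-1)⋯(p-q+1)`, with `S`
the Stirling numbers of the second kind, splits `f` into the rational series
`∑_p (p+n)!/(p-q)! u^p = (q+n)! u^q / (1-u)^(q+n+1)`. After the substitution and the factor
`e^{-nt}` each becomes `(q+n)! e^t (e^t-1)^q`, which is `(q+n)!/(q+1)` times the derivative of
`(e^t-1)^(q+1)`; so its `t^m/m!` coefficient is `q! (q+n)! S(m+1,q+1)`. Finally `S(l+1,q+1)` is
the `x^l` coefficient of `Q_q(x)`.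
-/

open Nat

theorem stirling1_eq_stirlingFirst : stirling1 = stirlingFirst := by
  funext n k
  induction n generalizing k with
  | zero => cases k <;> rfl
  | succ n ih =>
    cases k with
    | zero => rfl
    | succ k => rw [stirling1, stirlingFirst_succ_succ, ih, ih, add_comm]

namespace Nat

theorem sum_stirlingFirst_mul_pow (n x : ℕ) :
    ∑ k ∈ range (n + 1), stirlingFirst n k * x ^ k = x.ascFactorial n := by
  induction n with
  | zero => simp
  | succ n ih =>
    have shift : n * ∑ k ∈ range (n + 1), stirlingFirst n (k + 1) * x ^ (k + 1) =
        n * ∑ k ∈ range (n + 1), stirlingFirst n k * x ^ k := by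
      cases n with
      | zero => simp
      | succ n =>
        rw [sum_range_succ, stirlingFirst_eq_zero_of_lt (lt_add_one _), sum_range_succ' _ (n + 1),
          stirlingFirst_succ_zero]
        simp
    rw [sum_range_succ', stirlingFirst_succ_zero, zero_mul, add_zero, ascFactorial_succ, ← ih]
    simp only [stirlingFirst_succ_succ, add_mul, sum_add_distrib, mul_assoc, ← mul_sum, shift]
    rw [mul_sum _ _ x, add_comm]
    congr 1
    exact sum_congr rfl fun k _ => by ring

theorem pow_eq_sum_stirlingSecond_mul_descFactorial (n x : ℕ) :
    x ^ n = ∑ k ∈ range (n + 1), stirlingSecond n k * x.descFactorial k := by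
  induction n with
  | zero => simp
  | succ n ih =>
    have step (k : ℕ) :
        x * x.descFactorial k = x.descFactorial (k + 1) + k * x.descFactorial k := by
      rcases le_or_gt k x with h | h
      · rw [descFactorial_succ, ← add_mul, Nat.sub_add_cancel h]
      · simp [descFactorial_eq_zero_iff_lt.2 h]
    have shift :
        ∑ k ∈ range (n + 1), (k + 1) * stirlingSecond n (k + 1) * x.descFactorial (k + 1) =
          ∑ k ∈ range (n + 1), stirlingSecond n k * (k * x.descFactorial k) := by
      rw [sum_range_succ, stirlingSecond_eq_zero_of_lt (lt_add_one _), sum_range_succ' _ n]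
      simp only [mul_zero, zero_mul, add_zero]
      exact sum_congr rfl fun k _ => by ring
    rw [sum_range_succ', stirlingSecond_succ_zero, zero_mul, add_zero]
    simp only [stirlingSecond_succ_succ, add_mul _ _ (x.descFactorial _), sum_add_distrib]
    rw [shift, pow_succ', ih, mul_sum, ← sum_add_distrib]
    refine sum_congr rfl fun k _ => ?_
    rw [mul_left_comm, step]
    ring

theorem succ_pow_eq_sum_stirlingSecond_mul_descFactorial (l p : ℕ) :
    (p + 1) ^ l = ∑ q ∈ range (l + 1), stirlingSecond (l + 1) (q + 1) * p.descFactorial q := by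
  have h := pow_eq_sum_stirlingSecond_mul_descFactorial (l + 1) (p + 1)
  rw [sum_range_succ', stirlingSecond_succ_zero, zero_mul, add_zero] at h
  simp only [succ_descFactorial_succ, mul_left_comm _ (p + 1), ← mul_sum, pow_succ'] at h
  exact Nat.eq_of_mul_eq_mul_left (succ_pos p) h

theorem descFactorial_mul_ascFactorial (q n r : ℕ) :
    (q + r).descFactorial q * (q + r + 1).ascFactorial n =
      (q + n)! * (q + n + r).choose (q + n) := by
  apply Nat.eq_of_mul_eq_mul_left (mul_pos (factorial_pos r) (factorial_pos (q + r)))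
  have h1 := factorial_mul_descFactorial (le_add_right q r)
  have h2 := factorial_mul_ascFactorial (q + r) n
  have h3 := add_choose_mul_factorial_mul_factorial (q + n) r
  rw [add_tsub_cancel_left] at h1
  rw [← choose_symm_add] at h3
  rw [show q + r + n = q + n + r by ring] at h2
  calc r ! * (q + r)! * ((q + r).descFactorial q * (q + r + 1).ascFactorial n)
      = (r ! * (q + r).descFactorial q) * ((q + r)! * (q + r + 1).ascFactorial n) := by ring
    _ = (q + r)! * (q + n + r)! := by rw [h1, h2]
    _ = r ! * (q + r)! * ((q + n)! * (q + n + r).choose (q + n)) := by rw [← h3]; ring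

end Nat

theorem derivative_exp_sub_one_pow_succ (p : ℕ) :
    d⁄dX ℚ ((expQ - 1) ^ (p + 1)) = (p + 1 : ℚ) • ((expQ - 1) ^ p * expQ) := by
  rw [derivative_pow, map_sub, derivative_one, sub_zero, expQ, derivative_exp, smul_eq_C_mul,
    map_add, map_natCast, map_one, Nat.cast_add_one, add_tsub_cancel_right]
  ring

theorem coeff_exp_sub_one_pow (p j : ℕ) :
    coeff j ((expQ - 1) ^ p) = (p ! * stirlingSecond j p : ℚ) / j ! := by
  induction j generalizing p with
  | zero =>
    rw [coeff_zero_eq_constantCoeff_apply, map_pow, map_sub, expQ, constantCoeff_exp, map_one,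
      sub_self]
    cases p <;> simp
  | succ j ih =>
    cases p with
    | zero => simp [coeff_one]
    | succ p =>
      have hderiv := congrArg (coeff j) (derivative_exp_sub_one_pow_succ p)
      rw [coeff_derivative, show (expQ - 1) ^ p * expQ = (expQ - 1) ^ (p + 1) + (expQ - 1) ^ p by
        ring, coeff_smul, map_add, ih, ih] at hderiv
      rw [eq_div_iff (by positivity), factorial_succ j, cast_mul, cast_add_one, ← mul_assoc,
        hderiv, smul_eq_mul, stirlingSecond_succ_succ, factorial_succ]
      field_simp
      push_cast
      ring

theorem coeff_exp_sub_one_pow_mul_exp (q m : ℕ) :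
    coeff m ((expQ - 1) ^ q * expQ) = (q ! * stirlingSecond (m + 1) (q + 1) : ℚ) / m ! := by
  have hderiv := congrArg (coeff m) (derivative_exp_sub_one_pow_succ q)
  rw [coeff_derivative, coeff_exp_sub_one_pow, coeff_smul, smul_eq_mul, factorial_succ,
    factorial_succ] at hderiv
  rw [eq_div_iff (by positivity)]
  push_cast at hderiv
  field_simp at hderiv
  linear_combination -hderiv

theorem expQ_mul_expNegQ : expQ * expNegQ = 1 :=
  exp_mul_exp_neg_eq_one

theorem rescale_neg_natCast_expQ (n : ℕ) : rescale (-(n : ℚ)) expQ = expNegQ ^ n := by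
  rw [expNegQ, ← map_pow, expQ, exp_pow_eq_rescale_exp, rescale_rescale, mul_neg_one]

theorem constantCoeff_one_sub_expNegQ : constantCoeff (1 - expNegQ) = 0 := by
  rw [map_sub, map_one, ← coeff_zero_eq_constantCoeff_apply, expNegQ, coeff_rescale, pow_zero,
    one_mul, coeff_zero_eq_constantCoeff_apply, expQ, constantCoeff_exp, sub_self]

theorem hasSubst_one_sub_expNegQ : HasSubst (1 - expNegQ) :=
  HasSubst.of_constantCoeff_zero' constantCoeff_one_sub_expNegQ

noncomputable abbrev substOneSubExpNeg : ℚ⟦X⟧ →ₐ[ℚ] ℚ⟦X⟧ :=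
  substAlgHom hasSubst_one_sub_expNegQ

theorem coeff_one_sub_expNegQ_pow_of_lt {d j : ℕ} (h : j < d) :
    coeff j ((1 - expNegQ) ^ d) = 0 :=
  coeff_of_lt_order _ <| (Nat.cast_lt.2 h).trans_le <|
    le_order_pow_of_constantCoeff_eq_zero d constantCoeff_one_sub_expNegQ

theorem liEGF_eq_substOneSubExpNeg (k : ℤ) :
    liEGF k = substOneSubExpNeg (mk fun p => ((p : ℚ) + 1) ^ (-k)) := by
  ext j
  rw [liEGF, coeff_mk, coe_substAlgHom, coeff_subst' hasSubst_one_sub_expNegQ,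
    finsum_eq_sum_of_support_subset (s := range (j + 1))]
  · simp only [coeff_mk, smul_eq_mul]
  · intro d hd
    rw [Function.mem_support] at hd
    rw [coe_range, Set.mem_Iio, Nat.lt_succ_iff]
    by_contra! h
    exact hd (by rw [coeff_one_sub_expNegQ_pow_of_lt h, smul_zero])

theorem substOneSubExpNeg_invOneSubPow (d : ℕ) :
    substOneSubExpNeg (invOneSubPow ℚ d : ℚ⟦X⟧) = expQ ^ d := by
  have hinv : substOneSubExpNeg (invOneSubPow ℚ d : ℚ⟦X⟧) * expNegQ ^ d = 1 := by
    have h := congrArg substOneSubExpNeg (invOneSubPow ℚ d).val_inv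
    rwa [map_mul, invOneSubPow_inv_eq_one_sub_pow, map_pow, map_sub, map_one, substAlgHom_X,
      sub_sub_cancel] at h
  calc substOneSubExpNeg (invOneSubPow ℚ d : ℚ⟦X⟧)
      = substOneSubExpNeg (invOneSubPow ℚ d : ℚ⟦X⟧) * (expNegQ * expQ) ^ d := by
        rw [mul_comm expNegQ, expQ_mul_expNegQ, one_pow, mul_one]
    _ = expQ ^ d := by rw [mul_pow, ← mul_assoc, hinv, one_mul]

theorem pbEGF_natCast (k : ℤ) (n : ℕ) :
    pbEGF k n = expNegQ ^ n * substOneSubExpNeg (mk fun p => ((p : ℚ) + 1) ^ (-k)) := by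
  rw [pbEGF, rescale_neg_natCast_expQ, liEGF_eq_substOneSubExpNeg]

theorem mk_pow_mul_ascFactorial_eq_sum_stirlingFirst (l n : ℕ) :
    (mk fun p => ((p : ℚ) + 1) ^ l * ((p + 1).ascFactorial n : ℚ)) =
      ∑ j ∈ range (n + 1),
        (stirlingFirst n j : ℚ) • mk fun p => ((p : ℚ) + 1) ^ (l + j) := by
  ext p
  rw [coeff_mk, map_sum, ← sum_stirlingFirst_mul_pow, cast_sum, mul_sum]
  refine sum_congr rfl fun j _ => ?_
  rw [coeff_smul, coeff_mk, smul_eq_mul, pow_add]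
  push_cast
  ring

theorem scrB_eq_coeff (l m n : ℕ) :
    scrB l m n = m ! * coeff m (expNegQ ^ n *
      substOneSubExpNeg (mk fun p => ((p : ℚ) + 1) ^ l * ((p + 1).ascFactorial n : ℚ))) := by
  rw [scrB, mk_pow_mul_ascFactorial_eq_sum_stirlingFirst, map_sum, mul_sum, map_sum, mul_sum]
  refine sum_congr rfl fun j _ => ?_
  rw [stirling1_eq_stirlingFirst, pbPoly, pbEGF_natCast, map_smul, mul_smul_comm, coeff_smul,
    smul_eq_mul, show -(-(l : ℤ) - j) = ((l + j : ℕ) : ℤ) by push_cast; ring]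
  simp only [zpow_natCast]
  ring

theorem mk_descFactorial_mul_ascFactorial (q n : ℕ) :
    (mk fun p => ((p.descFactorial q * (p + 1).ascFactorial n : ℕ) : ℚ)) =
      ((q + n)! : ℚ) • (X ^ q * (invOneSubPow ℚ (q + n + 1) : ℚ⟦X⟧)) := by
  ext p
  rw [coeff_mk, coeff_smul, coeff_X_pow_mul', invOneSubPow_val_succ_eq_mk_add_choose]
  split_ifs with h
  · obtain ⟨r, rfl⟩ := Nat.exists_eq_add_of_le h
    rw [coeff_mk, add_tsub_cancel_left, descFactorial_mul_ascFactorial, smul_eq_mul, cast_mul]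
  · rw [descFactorial_eq_zero_iff_lt.2 (not_le.1 h), zero_mul, cast_zero, smul_zero]

theorem expNegQ_pow_mul_substOneSubExpNeg_descFactorial (q n : ℕ) :
    expNegQ ^ n *
        substOneSubExpNeg (mk fun p => ((p.descFactorial q * (p + 1).ascFactorial n : ℕ) : ℚ)) =
      ((q + n)! : ℚ) • ((expQ - 1) ^ q * expQ) := by
  rw [mk_descFactorial_mul_ascFactorial, map_smul, map_mul, map_pow, substAlgHom_X,
    substOneSubExpNeg_invOneSubPow, mul_smul_comm]
  congr 1
  calc expNegQ ^ n * ((1 - expNegQ) ^ q * expQ ^ (q + n + 1))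
      = (expNegQ * expQ) ^ n * (((1 - expNegQ) * expQ) ^ q * expQ) := by
        rw [mul_pow, mul_pow, pow_add, pow_add, pow_one]
        ring
    _ = (expQ - 1) ^ q * expQ := by
        rw [mul_comm expNegQ, expQ_mul_expNegQ, one_pow, one_mul, sub_mul, one_mul,
          mul_comm expNegQ, expQ_mul_expNegQ]

theorem mk_pow_mul_ascFactorial_eq_sum_descFactorial (l n : ℕ) :
    (mk fun p => ((p : ℚ) + 1) ^ l * ((p + 1).ascFactorial n : ℚ)) =
      ∑ q ∈ range (l + 1), (stirlingSecond (l + 1) (q + 1) : ℚ) •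
        mk fun p => ((p.descFactorial q * (p + 1).ascFactorial n : ℕ) : ℚ) := by
  ext p
  rw [coeff_mk, map_sum]
  simp only [coeff_smul, coeff_mk, smul_eq_mul, cast_mul, ← mul_assoc, ← sum_mul]
  exact_mod_cast congrArg (· * (p + 1).ascFactorial n)
    (succ_pow_eq_sum_stirlingSecond_mul_descFactorial l p)

theorem scrB_eq_sum (l m n : ℕ) :
    scrB l m n = ∑ q ∈ range (l + 1), (stirlingSecond (l + 1) (q + 1) : ℚ) *
      (q ! * (q + n)! * stirlingSecond (m + 1) (q + 1)) := by
  rw [scrB_eq_coeff, mk_pow_mul_ascFactorial_eq_sum_descFactorial, map_sum, mul_sum, map_sum,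
    mul_sum]
  refine sum_congr rfl fun q _ => ?_
  rw [map_smul, mul_smul_comm, expNegQ_pow_mul_substOneSubExpNeg_descFactorial, coeff_smul,
    coeff_smul, coeff_exp_sub_one_pow_mul_exp, smul_eq_mul, smul_eq_mul]
  field_simp

theorem mk_stirlingSecond_mul_one_sub (j : ℕ) :
    (mk fun l => (stirlingSecond (l + 1) (j + 2) : ℚ) : ℚ⟦X⟧) *
        (1 - ((j + 1 : ℕ) + 1 : ℚ) • X) =
      X * (mk fun l => (stirlingSecond (l + 1) (j + 1) : ℚ) : ℚ⟦X⟧) := by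
  ext l
  rw [mul_sub, mul_one, map_sub, mul_smul_comm, coeff_smul, smul_eq_mul]
  cases l with
  | zero => simp [stirlingSecond_eq_zero_of_lt]
  | succ l =>
    rw [coeff_succ_mul_X, coeff_succ_X_mul, coeff_mk, coeff_mk, coeff_mk,
      stirlingSecond_succ_succ (l + 1) (j + 1)]
    push_cast
    ring

theorem mk_stirlingSecond_mul_prod (j : ℕ) :
    (mk fun l => (stirlingSecond (l + 1) (j + 1) : ℚ) : ℚ⟦X⟧) *
      ∏ ν ∈ range (j + 1), (1 - ((ν : ℚ) + 1) • X) = X ^ j := by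
  induction j with
  | zero =>
    simp only [stirlingSecond_one_right, cast_one, zero_add, range_one, prod_singleton,
      cast_zero, one_smul, pow_zero]
    exact mk_one_mul_one_sub_eq_one ℚ
  | succ j ih =>
    rw [prod_range_succ, mul_left_comm, mk_stirlingSecond_mul_one_sub,
      mul_comm (∏ ν ∈ range (j + 1), _), mul_assoc, ih]
    ring

theorem coeff_Qser (j l : ℕ) : coeff l (Qser j) = stirlingSecond (l + 1) (j + 1) := by
  have hunit (ν : ℕ) : IsUnit (1 - ((ν : ℚ) + 1) • X : ℚ⟦X⟧) := by
    rw [isUnit_iff_constantCoeff, smul_eq_C_mul, map_sub, map_one, map_mul, constantCoeff_X,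
      mul_zero, sub_zero]
    exact isUnit_one
  have hprod : (∏ ν ∈ range (j + 1), (1 - ((ν : ℚ) + 1) • X : ℚ⟦X⟧)) *
      ∏ ν ∈ range (j + 1), Ring.inverse (1 - ((ν : ℚ) + 1) • X : ℚ⟦X⟧) = 1 := by
    rw [← prod_mul_distrib]
    exact prod_eq_one fun ν _ => Ring.mul_inverse_cancel _ (hunit ν)
  rw [Qser, ← mk_stirlingSecond_mul_prod, mul_assoc, hprod, mul_one, coeff_mk]

/-- ∑_{l,m} 𝓑_m^{(-l)}(n) x^l y^m = ∑_j j!(j+n)! Q_j(x)Q_j(y), stated coefficientwise;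
  the sum over j truncates at min(l,m) since Q_j has order j. -/
theorem scrB_ogf (n : ℕ) (l m : ℕ) :
    scrB l m n =
      ∑ j ∈ range (min l m + 1),
        (j.factorial : ℚ) * ((j + n).factorial : ℚ) *
          coeff l (Qser j) * coeff m (Qser j) := by
  have hvanish : ∀ q ∈ range (l + 1), q ∉ range (min l m + 1) →
      (stirlingSecond (l + 1) (q + 1) : ℚ) *
        (q ! * (q + n)! * stirlingSecond (m + 1) (q + 1)) = 0 := by
    intro q hq hq'
    rw [mem_range] at hq hq'
    rw [stirlingSecond_eq_zero_of_lt (by omega : m + 1 < q + 1), cast_zero, mul_zero, mul_zero]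
  rw [scrB_eq_sum, ← sum_subset (range_subset_range.2 (by omega)) hvanish]
  refine sum_congr rfl fun q _ => ?_
  rw [coeff_Qser, coeff_Qser]
  ring
end

section
/- In particular for n=0: B_m^{(-l)} = \sum_{j=0}^{\min(l,m)} (j!)^2 {l+1 choose_2 j+1} {m+1 choose_2 j+1} for all nonnegative integers l, m. -/
open PowerSeries Finset

/-!
Since `Li_{-l}(1 - e^{-t})/(1 - e^{-t}) = ∑_k (k+1)^l (1 - e^{-t})^k` and
`m! [t^m] (1 - e^{-t})^k = (-1)^(m+k) k! {m k}`, we get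
`B_m^{(-l)} = ∑_k (-1)^(m+k) k! {m k} (k+1)^l`.
Expanding `(k+1)^l = ∑_j j! {l+1 j+1} (k choose j)` and exchanging the sums, the symmetric
formula follows from the inversion `∑_k (-1)^(m+k) k! {m k} (k choose j) = j! {m+1 j+1}`.
This holds by induction on `m`: the signed weights `a m k = (-1)^(m+k) k! {m k}` satisfy
`a (m+1) (k+1) = (k+1) (a m k - a m (k+1))`, and summation by parts turns this into the
recurrence of `j! {m+1 j+1}`.
-/

theorem stirling2_eq_stirlingSecond : stirling2 = Nat.stirlingSecond := by
  funext n k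
  induction n generalizing k with
  | zero => cases k <;> rfl
  | succ n ih =>
    cases k with
    | zero => rfl
    | succ k => rw [stirling2, Nat.stirlingSecond_succ_succ, ih, ih, add_comm]

namespace Nat

theorem stirlingSecond_succ_succ_eq_sum_choose (n k : ℕ) :
    stirlingSecond (n + 1) (k + 1) = ∑ i ∈ range (n + 1), n.choose i * stirlingSecond i k := by
  induction n generalizing k with
  | zero => cases k <;> rfl
  | succ n ih =>
    have pascal := sum_choose_succ_mul (R := ℕ) (fun i _ => stirlingSecond i k) n
    simp only [Nat.cast_id] at pascal
    rw [pascal, ← ih]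
    cases k with
    | zero => simp [stirlingSecond_one_right]
    | succ k =>
      simp only [stirlingSecond_succ_succ, mul_add, sum_add_distrib, mul_left_comm _ (k + 1),
        ← mul_sum, ← ih]
      ring

theorem succ_pow_eq_sum_stirlingSecond_mul_choose (x l : ℕ) :
    (x + 1) ^ l = ∑ j ∈ range (l + 1), stirlingSecond (l + 1) (j + 1) * j ! * x.choose j := by
  induction l with
  | zero => simp [stirlingSecond_one_right]
  | succ l ih =>
    have hx (j : ℕ) :
        x.choose j * (x + 1) = (j + 1) * x.choose j + (j + 1) * x.choose (j + 1) := by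
      rw [mul_comm, add_one_mul_choose_eq, choose_succ_succ']
      ring
    calc (x + 1) ^ (l + 1)
        = ∑ j ∈ range (l + 1), (stirlingSecond (l + 1) (j + 1) * (j + 1)! * x.choose j +
            stirlingSecond (l + 1) (j + 1) * (j + 1)! * x.choose (j + 1)) := by
          rw [pow_succ, ih, sum_mul]
          refine sum_congr rfl fun j _ => ?_
          rw [factorial_succ, mul_assoc, hx]
          ring
      _ = ∑ j ∈ range (l + 2), stirlingSecond (l + 1) (j + 1) * (j + 1)! * x.choose j +
            ∑ j ∈ range (l + 2), stirlingSecond (l + 1) j * j ! * x.choose j := by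
          rw [sum_add_distrib, sum_range_succ _ (l + 1), sum_range_succ' _ (l + 1),
            stirlingSecond_eq_zero_of_lt (by omega : l + 1 < l + 1 + 1)]
          simp
      _ = ∑ j ∈ range (l + 2), stirlingSecond (l + 2) (j + 1) * j ! * x.choose j := by
          rw [← sum_add_distrib]
          refine sum_congr rfl fun j _ => ?_
          rw [stirlingSecond_succ_succ (l + 1) j, factorial_succ]
          ring

end Nat

open Nat

/-- `altStirling m k = m! [t^m] (1 - e^{-t})^k`. -/
def altStirling (m k : ℕ) : ℤ := (-1) ^ (m + k) * k ! * stirlingSecond m k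

theorem altStirling_succ_zero (m : ℕ) : altStirling (m + 1) 0 = 0 := by
  simp [altStirling]

theorem altStirling_succ_succ (m k : ℕ) :
    altStirling (m + 1) (k + 1) = (k + 1) * (altStirling m k - altStirling m (k + 1)) := by
  simp only [altStirling, stirlingSecond_succ_succ, factorial_succ]
  push_cast
  ring

theorem altStirling_eq_zero_of_lt {m k : ℕ} (h : m < k) : altStirling m k = 0 := by
  simp [altStirling, stirlingSecond_eq_zero_of_lt h]

theorem sum_altStirling_succ_mul (m : ℕ) (f : ℕ → ℤ) :
    ∑ k ∈ range (m + 2), altStirling (m + 1) k * f k =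
      ∑ k ∈ range (m + 1), altStirling m k * ((k + 1) * f (k + 1) - k * f k) := by
  have shift : ∑ k ∈ range (m + 1), (k + 1 : ℤ) * altStirling m (k + 1) * f (k + 1) =
      ∑ k ∈ range (m + 1), (k : ℤ) * altStirling m k * f k := by
    have := sum_range_succ' (fun k => (k : ℤ) * altStirling m k * f k) (m + 1)
    rw [sum_range_succ, altStirling_eq_zero_of_lt (lt_add_one m)] at this
    push_cast at this
    simpa using this.symm
  rw [sum_range_succ', altStirling_succ_zero, zero_mul, add_zero]
  simp only [altStirling_succ_succ]
  calc ∑ k ∈ range (m + 1),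
        (k + 1 : ℤ) * (altStirling m k - altStirling m (k + 1)) * f (k + 1)
      = ∑ k ∈ range (m + 1), (k + 1 : ℤ) * altStirling m k * f (k + 1) -
          ∑ k ∈ range (m + 1), (k + 1 : ℤ) * altStirling m (k + 1) * f (k + 1) := by
        rw [← sum_sub_distrib]
        exact sum_congr rfl fun k _ => by ring
    _ = _ := by
        rw [shift, ← sum_sub_distrib]
        exact sum_congr rfl fun k _ => by ring

theorem sum_altStirling_mul_choose (m j : ℕ) :
    ∑ k ∈ range (m + 1), altStirling m k * k.choose j =
      j ! * stirlingSecond (m + 1) (j + 1) := by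
  induction m generalizing j with
  | zero => cases j <;> simp [altStirling, stirlingSecond_succ_succ]
  | succ m ih =>
    rw [sum_altStirling_succ_mul]
    cases j with
    | zero => simpa [stirlingSecond_one_right] using ih 0
    | succ j =>
      have hchoose (k : ℕ) : ((k : ℤ) + 1) * (k + 1).choose (j + 1) - k * k.choose (j + 1) =
          (j + 2) * k.choose (j + 1) + (j + 1) * k.choose j := by
        have h := congrArg (Nat.cast (R := ℤ)) (add_one_mul_choose_eq k j)
        rw [choose_succ_succ'] at h ⊢
        push_cast at h ⊢
        linear_combination h
      simp only [hchoose, mul_add, sum_add_distrib, mul_left_comm _ ((j : ℤ) + 2),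
        mul_left_comm _ ((j : ℤ) + 1), ← mul_sum, ih]
      rw [stirlingSecond_succ_succ (m + 1) (j + 1), factorial_succ]
      push_cast
      ring

theorem sum_altStirling_mul_succ_pow (l m : ℕ) :
    ∑ k ∈ range (m + 1), altStirling m k * ((k : ℤ) + 1) ^ l =
      ∑ j ∈ range (min l m + 1),
        (j ! : ℤ) ^ 2 * stirlingSecond (l + 1) (j + 1) * stirlingSecond (m + 1) (j + 1) := by
  calc ∑ k ∈ range (m + 1), altStirling m k * ((k : ℤ) + 1) ^ l
      = ∑ k ∈ range (m + 1), altStirling m k *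
          ∑ j ∈ range (l + 1), (stirlingSecond (l + 1) (j + 1) * j ! * k.choose j : ℤ) := by
        refine sum_congr rfl fun k _ => ?_
        congr 1
        exact_mod_cast succ_pow_eq_sum_stirlingSecond_mul_choose k l
    _ = ∑ j ∈ range (l + 1), (stirlingSecond (l + 1) (j + 1) * j ! : ℤ) *
          ∑ k ∈ range (m + 1), altStirling m k * k.choose j := by
        simp only [mul_sum]
        rw [sum_comm]
        exact sum_congr rfl fun j _ => sum_congr rfl fun k _ => by ring
    _ = ∑ j ∈ range (l + 1),
          (j ! : ℤ) ^ 2 * stirlingSecond (l + 1) (j + 1) * stirlingSecond (m + 1) (j + 1) := by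
        simp only [sum_altStirling_mul_choose]
        exact sum_congr rfl fun j _ => by ring
    _ = _ := by
        refine (sum_subset (range_subset_range.2 (by omega)) fun j hl hm => ?_).symm
        rw [mem_range] at hl hm
        simp [stirlingSecond_eq_zero_of_lt (by omega : m + 1 < j + 1)]

theorem PowerSeries.factorial_mul_coeff_mul {R : Type*} [CommSemiring R] (f g : R⟦X⟧)
    (n : ℕ) :
    (n ! : R) * coeff n (f * g) =
      ∑ i ∈ range (n + 1), n.choose i * (i ! * coeff i f) * ((n - i)! * coeff (n - i) g) := by
  rw [coeff_mul, Nat.sum_antidiagonal_eq_sum_range_succ_mk, mul_sum]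
  refine sum_congr rfl fun i hi => ?_
  rw [← choose_mul_factorial_mul_factorial (mem_range_succ_iff.1 hi)]
  push_cast
  ring

theorem factorial_mul_coeff_expNegQ (n : ℕ) : (n ! : ℚ) * coeff n expNegQ = (-1) ^ n := by
  simp [expNegQ, expQ, coeff_rescale, coeff_exp]
  field_simp

theorem factorial_mul_coeff_one_sub_expNegQ_pow (n k : ℕ) :
    (n ! : ℚ) * coeff n ((1 - expNegQ) ^ k) = altStirling n k := by
  induction k generalizing n with
  | zero => cases n <;> simp [altStirling, coeff_one]
  | succ k ih =>
    have hterm : ∀ i ∈ range (n + 1), (n.choose i : ℚ) * altStirling i k * (-1) ^ (n - i) =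
        (-1) ^ (n + k) * k ! * (n.choose i * stirlingSecond i k : ℕ) := by
      intro i hi
      have hsign : ((-1 : ℚ) ^ (i + k)) * (-1) ^ (n - i) = (-1) ^ (n + k) := by
        rw [← pow_add]
        congr 1
        have := mem_range_succ_iff.1 hi
        omega
      simp only [altStirling]
      push_cast
      linear_combination (n.choose i * k ! * stirlingSecond i k : ℚ) * hsign
    rw [pow_succ, mul_one_sub, map_sub, mul_sub, factorial_mul_coeff_mul]
    simp only [ih, factorial_mul_coeff_expNegQ]
    rw [sum_congr rfl hterm, ← mul_sum, ← Nat.cast_sum,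
      ← stirlingSecond_succ_succ_eq_sum_choose, stirlingSecond_succ_succ]
    simp only [altStirling, factorial_succ]
    push_cast
    ring

theorem pbB_neg_eq_sum_altStirling (l m : ℕ) :
    pbB (-(l : ℤ)) m =
      ∑ k ∈ range (m + 1), (altStirling m k : ℚ) * ((k : ℚ) + 1) ^ l := by
  rw [pbB, pbPoly, pbEGF, neg_zero, rescale_zero]
  simp only [RingHom.coe_comp, Function.comp_apply, expQ, constantCoeff_exp, map_one, one_mul]
  rw [liEGF, coeff_mk, mul_sum]
  refine sum_congr rfl fun k _ => ?_
  rw [← factorial_mul_coeff_one_sub_expNegQ_pow, neg_neg, zpow_natCast]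
  ring

theorem pbB_eq_sum_stirling2 (l m : ℕ) :
    pbB (-(l : ℤ)) m =
      ∑ j ∈ range (min l m + 1),
        (j.factorial : ℚ) ^ 2 * (stirling2 (l + 1) (j + 1) : ℚ) *
          (stirling2 (m + 1) (j + 1) : ℚ) := by
  rw [pbB_neg_eq_sum_altStirling, stirling2_eq_stirlingSecond]
  exact_mod_cast sum_altStirling_mul_succ_pow l m
end
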